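/- arXiv:2507.09520 — 2 statements merged into one kernel-verified Lean document; each statement's English description precedes it below -/
import Mathlib

section
/- Let γ ⊆ E^{ef} be a paracel and let β ⊆ E^{ef} be disjoint from γ. Suppose there exist twins α, α' ∈ A_{β,γ} with α ∩ α' = ∅ and β ∪ γ ∪ α ∪ α' = E^{ef}. Then β is exactly the set of all smoots for the paracel γ. -/
open Finset

section Defs

variable {V : Type*} {E : Type*}

/-- The graph on vertex set `V` whose adjacency is given by the edges in `F`
(a loop joins nothing). -/
def etaGraph (ends : E → Sym2 V) (F : Finset E) : SimpleGraph V where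
  Adj v w := v ≠ w ∧ ∃ g ∈ F, ends g = s(v, w)
  symm := by
    constructor
    rintro v w ⟨hvw, g, hg, hends⟩
    exact ⟨hvw.symm, g, hg, by rw [hends, Sym2.eq_swap]⟩
  loopless := by constructor; rintro v ⟨h, -⟩; exact h rfl

/-- `k(F)`: the number of connected components of `η(F)`. -/
noncomputable def kComp (ends : E → Sym2 V) (F : Finset E) : ℕ :=
  Nat.card (etaGraph ends F).ConnectedComponent

/-- The edge with endpoint pair `s` joins the connected component of `a`
with that of `b` in the graph `G`. -/
def Joins (G : SimpleGraph V) (s : Sym2 V) (a b : V) : Prop :=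
  ∃ u v : V, s = s(u, v) ∧ G.Reachable a u ∧ G.Reachable b v

/-- `F ⊆ E^{ef}` is a paracel if `e` and `f` each join the same two distinct
connected components of `η(F)`. -/
def IsParacel (ends : E → Sym2 V) (e f : E) (F : Finset E) : Prop :=
  e ∉ F ∧ f ∉ F ∧ ∃ a b : V,
    ¬ (etaGraph ends F).Reachable a b ∧
    Joins (etaGraph ends F) (ends e) a b ∧
    Joins (etaGraph ends F) (ends f) a b

/-- `g ∈ E^{ef} ∖ F` is a smoot for the paracel `F` if it joins the same two
connected components of `η(F)` as `e` and `f` do. -/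
def IsSmoot (ends : E → Sym2 V) (e f : E) (F : Finset E) (g : E) : Prop :=
  g ∉ F ∧ g ≠ e ∧ g ≠ f ∧ ∃ a b : V,
    ¬ (etaGraph ends F).Reachable a b ∧
    Joins (etaGraph ends F) (ends e) a b ∧
    Joins (etaGraph ends F) (ends f) a b ∧
    Joins (etaGraph ends F) (ends g) a b

variable [DecidableEq E]

/-- `α` is compatible with `(β, γ)`. -/
def Compatible (ends : E → Sym2 V) (e f : E) (β γ α : Finset E) : Prop :=
  e ∉ α ∧ f ∉ α ∧ Disjoint α β ∧ Disjoint α γ ∧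
    IsParacel ends e f (γ ∪ α) ∧ ∀ g ∈ β, IsSmoot ends e f (γ ∪ α) g

/-- indicator function of a finite edge set, as an exponent vector. -/
def indic (A : Finset E) : E → ℕ := fun g => if g ∈ A then 1 else 0

/-- `B_{β,γ}` as a set of exponent vectors `1_α + 1_{α'}` for twins `α, α'`. -/
def Bset (ends : E → Sym2 V) (e f : E) (β γ : Finset E) : Set (E → ℕ) :=
  { d | ∃ α α' : Finset E,
      Compatible ends e f β γ α ∧ Compatible ends e f β γ α' ∧
      Compatible ends e f β γ (α ∩ α') ∧ d = indic α + indic α' }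

/-- `x^F = ∏_{g ∈ F} x_g`. -/
noncomputable def xF (A : Finset E) : MvPolynomial E ℤ := ∏ g ∈ A, MvPolynomial.X g

variable [Fintype E]

/-- `E^{ef} = E ∖ {e, f}`. -/
def Eef (e f : E) : Finset E := Finset.univ \ {e, f}

/-- `x^d = ∏_g x_g^{d g}` for an exponent vector `d`. -/
noncomputable def xPow (d : E → ℕ) : MvPolynomial E ℤ := ∏ g : E, MvPolynomial.X g ^ d g

/-- `B_{β,γ}` as a finite set of exponent vectors, each counted once. -/
noncomputable def Bfin (ends : E → Sym2 V) (e f : E) (β γ : Finset E) :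
    Finset (E → ℕ) := by
  classical
  exact (Finset.univ.filter (fun p : Finset E × Finset E =>
      Compatible ends e f β γ p.1 ∧ Compatible ends e f β γ p.2 ∧
      Compatible ends e f β γ (p.1 ∩ p.2))).image fun p => indic p.1 + indic p.2

/-- `T_A^B = Σ_{A ⊆ F, F ∩ B = ∅} x^F q^{k(F)}` in `R = (MvPolynomial E ℤ)[q]`. -/
noncomputable def Tab (ends : E → Sym2 V) (A B : Finset E) :
    Polynomial (MvPolynomial E ℤ) :=
  ∑ F ∈ Finset.univ.filter (fun F : Finset E => A ⊆ F ∧ F ∩ B = ∅),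
    Polynomial.C (xF F) * Polynomial.X ^ kComp ends F

/-- `D = T_e^f T_f^e − T_{ef} T^{ef}`. -/
noncomputable def Dpoly (ends : E → Sym2 V) (e f : E) :
    Polynomial (MvPolynomial E ℤ) :=
  Tab ends {e} {f} * Tab ends {f} {e} - Tab ends {e, f} ∅ * Tab ends ∅ {e, f}

/-- The combinatorial sum
`S = Σ_{(β,γ) disjoint ⊆ E^{ef}} x^β x^γ Σ_{d ∈ B_{β,γ}} x^d`. -/
noncomputable def Ssum (ends : E → Sym2 V) (e f : E) : MvPolynomial E ℤ := by
  classical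
  exact ∑ p ∈ Finset.univ.filter (fun p : Finset E × Finset E =>
      p.1 ⊆ Eef e f ∧ p.2 ⊆ Eef e f ∧ Disjoint p.1 p.2),
    xF p.1 * xF p.2 * ∑ d ∈ Bfin ends e f p.1 p.2, xPow d

/-- `k₁(A,B) = k(A+e) + k(B+f)`. -/
noncomputable def kOne (ends : E → Sym2 V) (e f : E) (A B : Finset E) : ℕ :=
  kComp ends (insert e A) + kComp ends (insert f B)

/-- `k₂(A,B) = k(A+e+f) + k(B)`. -/
noncomputable def kTwo (ends : E → Sym2 V) (e f : E) (A B : Finset E) : ℕ :=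
  kComp ends (insert f (insert e A)) + kComp ends B

/-- The coefficient of the monomial `x^lam` in an element of
`(MvPolynomial E ℤ)[q]`, as an element of `ℤ[q]`. -/
noncomputable def monCoeff (P : Polynomial (MvPolynomial E ℤ)) (lam : E →₀ ℕ) :
    Polynomial ℤ :=
  P.sum fun n c => Polynomial.C (MvPolynomial.coeff lam c) * Polynomial.X ^ n

end Defs
lemma etaGraph_mono {V E : Type*} (ends : E → Sym2 V) {F F' : Finset E}
    (h : F ⊆ F') : etaGraph ends F ≤ etaGraph ends F' := by
  intro v w hvw
  obtain ⟨hne, g, hg, he⟩ := hvw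
  exact ⟨hne, g, h hg, he⟩

lemma smoot_not_mem_extra {V E : Type*} [DecidableEq E] (ends : E → Sym2 V)
    (e f : E) (γ α : Finset E) (hpar : IsParacel ends e f (γ ∪ α)) (g : E)
    (hs : IsSmoot ends e f γ g) : g ∉ α := by
  intro hgα
  obtain ⟨-, -, -, a, b, hnr', je', -, jg'⟩ := hs
  obtain ⟨-, -, a₁, b₁, hnr, hje, -⟩ := hpar
  have hmono : etaGraph ends γ ≤ etaGraph ends (γ ∪ α) :=
    etaGraph_mono ends Finset.subset_union_left
  obtain ⟨p, q, hpq, hap, hbq⟩ := jg'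
  have hpqne : p ≠ q := by
    rintro rfl
    exact hnr' (hap.trans hbq.symm)
  have hadj : (etaGraph ends (γ ∪ α)).Adj p q :=
    ⟨hpqne, g, Finset.mem_union_right _ hgα, hpq⟩
  have hab : (etaGraph ends (γ ∪ α)).Reachable a b :=
    ((hap.mono hmono).trans hadj.reachable).trans (hbq.mono hmono).symm
  obtain ⟨u, v, huv, hau, hbv⟩ := je'
  obtain ⟨u', v', huv', ha₁, hb₁⟩ := hje
  have huvH : (etaGraph ends (γ ∪ α)).Reachable u v :=
    ((hau.mono hmono).symm.trans hab).trans (hbv.mono hmono)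
  rw [huv, Sym2.eq_iff] at huv'
  rcases huv' with ⟨rfl, rfl⟩ | ⟨rfl, rfl⟩
  · exact hnr ((ha₁.trans huvH).trans hb₁.symm)
  · exact hnr ((ha₁.trans huvH.symm).trans hb₁.symm)

/-- if `γ` is a paracel, `β ⊆ E^{ef}` is disjoint from `γ`, and there are
twins `α, α' ∈ A_{β,γ}` with `α ∩ α' = ∅` and `β ∪ γ ∪ α ∪ α' = E^{ef}`, then `β` is
exactly the set of smoots for `γ`. -/
theorem stmt14 {V E : Type*} [Fintype V] [Fintype E] [DecidableEq E]
    (ends : E → Sym2 V) (e f : E) (hef : e ≠ f)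
    (γ β : Finset E) (hγ : IsParacel ends e f γ)
    (hβE : β ⊆ Eef e f) (hβγ : Disjoint β γ)
    (α α' : Finset E)
    (hα : Compatible ends e f β γ α) (hα' : Compatible ends e f β γ α')
    (htwin : Compatible ends e f β γ (α ∩ α'))
    (hdisj : α ∩ α' = ∅) (hcover : β ∪ γ ∪ α ∪ α' = Eef e f) :
    ∀ g : E, g ∈ β ↔ IsSmoot ends e f γ g := by
  intro g
  constructor
  · intro hgβ
    rw [hdisj] at htwin
    have hsm := htwin.2.2.2.2.2 g hgβ
    simpa [Finset.union_empty] using hsm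
  · intro hs
    have hgE : g ∈ Eef e f := by
      simp [Eef, hs.2.1, hs.2.2.1]
    rw [← hcover] at hgE
    simp only [Finset.mem_union] at hgE
    rcases hgE with ((hg | hg) | hg) | hg
    · exact hg
    · exact absurd hg hs.1
    · exact absurd hg (smoot_not_mem_extra ends e f γ α hα.2.2.2.2.1 g hs)
    · exact absurd hg (smoot_not_mem_extra ends e f γ α' hα'.2.2.2.2.1 g hs)
end

section
/- Suppose N ∈ R satisfies D = x_e · x_f · (1 − q) · N. Then for every assignment x : E → ℝ of strictly positive real values to the variables, the real number obtained by evaluating N at q = 1 and at these values of the x_g is nonnegative. (Equivalently, the random cluster model at q = 1 satisfies M_{ef}(1) ≥ 0 for all positive edge weights.) -/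
open Finset

section GraphAux

open SimpleGraph

variable {V : Type*} {E : Type*} [DecidableEq E] (ends : E → Sym2 V)

lemma stmt16_etaGraph_mono {F F' : Finset E} (h : F ⊆ F') :
    etaGraph ends F ≤ etaGraph ends F' := by
  intro v w hvw
  obtain ⟨hne, g, hg, hends⟩ := hvw
  exact ⟨hne, g, h hg, hends⟩

lemma stmt16_reach_insert_cases {g : E} {F : Finset E} {u v : V}
    (hg : ends g = s(u, v)) {a b : V}
    (h : (etaGraph ends (insert g F)).Reachable a b) :
    (etaGraph ends F).Reachable a b ∨
      ((etaGraph ends F).Reachable a u ∧ (etaGraph ends F).Reachable v b) ∨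
      ((etaGraph ends F).Reachable a v ∧ (etaGraph ends F).Reachable u b) := by
  obtain ⟨w⟩ := h
  induction w with
  | nil => exact Or.inl (Reachable.refl _)
  | @cons a c b hadj p ih =>
    obtain ⟨hne, g', hg', hends⟩ := hadj
    rcases Finset.mem_insert.mp hg' with rfl | hg'F
    · rw [hg] at hends
      have hcase : (a = u ∧ c = v) ∨ (a = v ∧ c = u) := by
        rw [Sym2.eq_iff] at hends
        tauto
      rcases hcase with ⟨rfl, rfl⟩ | ⟨rfl, rfl⟩
      · rcases ih with h1 | ⟨h1, h2⟩ | ⟨h1, h2⟩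
        · exact Or.inr (Or.inl ⟨Reachable.refl _, h1⟩)
        · exact Or.inl (h1.symm.trans h2)
        · exact Or.inl h2
      · rcases ih with h1 | ⟨h1, h2⟩ | ⟨h1, h2⟩
        · exact Or.inr (Or.inr ⟨Reachable.refl _, h1⟩)
        · exact Or.inl h2
        · exact Or.inl (h1.symm.trans h2)
    · have hac : (etaGraph ends F).Reachable a c := Adj.reachable ⟨hne, g', hg'F, hends⟩
      rcases ih with h1 | ⟨h1, h2⟩ | ⟨h1, h2⟩
      · exact Or.inl (hac.trans h1)
      · exact Or.inr (Or.inl ⟨hac.trans h1, h2⟩)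
      · exact Or.inr (Or.inr ⟨hac.trans h1, h2⟩)

variable [Finite V]

lemma stmt16_kComp_insert_le (g : E) (F : Finset E) :
    kComp ends (insert g F) ≤ kComp ends F := by
  apply Nat.card_le_card_of_surjective
    (SimpleGraph.ConnectedComponent.map
      (Hom.ofLE (stmt16_etaGraph_mono ends (Finset.subset_insert g F))))
  intro c
  refine c.ind fun w => ?_
  exact ⟨(etaGraph ends F).connectedComponentMk w, rfl⟩

lemma stmt16_kComp_insert_eq {g : E} {F : Finset E} {u v : V} (hg : ends g = s(u, v))
    (hr : (etaGraph ends F).Reachable u v) :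
    kComp ends (insert g F) = kComp ends F := by
  apply Nat.card_congr
  refine Quot.congrRight fun a b => ?_
  constructor
  · intro h
    rcases stmt16_reach_insert_cases ends hg h with h1 | ⟨h1, h2⟩ | ⟨h1, h2⟩
    · exact h1
    · exact (h1.trans hr).trans h2
    · exact (h1.trans hr.symm).trans h2
  · intro h
    exact h.mono (stmt16_etaGraph_mono ends (Finset.subset_insert g F))

lemma stmt16_kComp_le_insert_add_one {g : E} {F : Finset E} {u v : V}
    (hg : ends g = s(u, v)) :
    kComp ends F ≤ kComp ends (insert g F) + 1 := by
  classical
  set G0 := etaGraph ends F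
  set G1 := etaGraph ends (insert g F)
  set π : G0.ConnectedComponent → G1.ConnectedComponent :=
    SimpleGraph.ConnectedComponent.map
      (Hom.ofLE (stmt16_etaGraph_mono ends (Finset.subset_insert g F)))
  have hπmk : ∀ w : V, π (G0.connectedComponentMk w) = G1.connectedComponentMk w :=
    fun w => rfl
  set cu := G0.connectedComponentMk u
  have halmost : ∀ a b : G0.ConnectedComponent, π a = π b →
      a = b ∨ a = cu ∨ b = cu := by
    refine fun a b => a.ind₂ (fun x y hxy => ?_) b
    rw [hπmk, hπmk, ConnectedComponent.eq] at hxy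
    rcases stmt16_reach_insert_cases ends hg hxy with h1 | ⟨h1, h2⟩ | ⟨h1, h2⟩
    · exact Or.inl (ConnectedComponent.sound h1)
    · exact Or.inr (Or.inl (ConnectedComponent.sound h1))
    · exact Or.inr (Or.inr (ConnectedComponent.sound h2.symm))
  haveI hfin : Finite G1.ConnectedComponent := Quot.finite _
  haveI := Fintype.ofFinite G1.ConnectedComponent
  have hj : Function.Injective (fun c : G0.ConnectedComponent =>
      if c = cu then (none : Option G1.ConnectedComponent) else some (π c)) := by
    intro a b hab
    by_cases ha : a = cu <;> by_cases hb : b = cu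
    · exact ha.trans hb.symm
    · simp only [ha, if_pos, if_neg hb] at hab
      exact absurd hab (by simp)
    · simp only [hb, if_pos, if_neg ha] at hab
      exact absurd hab (by simp)
    · simp only [if_neg ha, if_neg hb, Option.some.injEq] at hab
      rcases halmost a b hab with h | h | h
      · exact h
      · exact absurd h ha
      · exact absurd h hb
  calc kComp ends F ≤ Nat.card (Option G1.ConnectedComponent) :=
        Nat.card_le_card_of_injective _ hj
    _ = kComp ends (insert g F) + 1 := Finite.card_option

lemma stmt16_kComp_insert_lt {g : E} {F : Finset E} {u v : V} (hg : ends g = s(u, v))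
    (hr : ¬ (etaGraph ends F).Reachable u v) :
    kComp ends (insert g F) < kComp ends F := by
  classical
  have huv : u ≠ v := fun h => hr (h ▸ Reachable.refl u)
  set G0 := etaGraph ends F
  set G1 := etaGraph ends (insert g F)
  set π : G0.ConnectedComponent → G1.ConnectedComponent :=
    SimpleGraph.ConnectedComponent.map
      (Hom.ofLE (stmt16_etaGraph_mono ends (Finset.subset_insert g F)))
  have hsurj : Function.Surjective π := by
    intro c
    refine c.ind fun w => ?_
    exact ⟨G0.connectedComponentMk w, rfl⟩
  have hnotinj : ¬ Function.Injective π := by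
    intro hinj
    have hadj : G1.Adj u v := ⟨huv, g, Finset.mem_insert_self g F, hg⟩
    have : π (G0.connectedComponentMk u) = π (G0.connectedComponentMk v) := by
      show G1.connectedComponentMk u = G1.connectedComponentMk v
      exact ConnectedComponent.sound hadj.reachable
    exact hr (ConnectedComponent.exact (hinj this))
  have : Fintype G0.ConnectedComponent := Fintype.ofFinite _
  have : Fintype G1.ConnectedComponent := Fintype.ofFinite _
  unfold kComp
  rw [Nat.card_eq_fintype_card, Nat.card_eq_fintype_card]
  exact Fintype.card_lt_of_surjective_not_injective π hsurj hnotinj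

lemma stmt16_kComp_supermodular (e f : E) (A : Finset E) :
    kComp ends (insert e A) + kComp ends (insert f A) ≤
      kComp ends (insert f (insert e A)) + kComp ends A := by
  obtain ⟨⟨u, v⟩, hg⟩ := Quot.exists_rep (ends f)
  have hg : ends f = s(u, v) := hg.symm
  by_cases hr : (etaGraph ends (insert e A)).Reachable u v
  · have h1 : kComp ends (insert f (insert e A)) = kComp ends (insert e A) :=
      stmt16_kComp_insert_eq ends hg hr
    have h2 : kComp ends (insert f A) ≤ kComp ends A := stmt16_kComp_insert_le ends f A
    omega
  · have hr0 : ¬ (etaGraph ends A).Reachable u v := fun h =>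
      hr (h.mono (stmt16_etaGraph_mono ends (Finset.subset_insert e A)))
    have h1 : kComp ends (insert e A) ≤ kComp ends (insert f (insert e A)) + 1 :=
      stmt16_kComp_le_insert_add_one ends hg
    have h2 : kComp ends (insert f A) < kComp ends A := stmt16_kComp_insert_lt ends hg hr0
    omega

end GraphAux

section AnAux

variable {V : Type*} {E : Type*} [Fintype E] [DecidableEq E]

lemma stmt16_inter_singleton_empty (F : Finset E) (f : E) : F ∩ {f} = ∅ ↔ f ∉ F := by
  simp [Finset.eq_empty_iff_forall_notMem]

lemma stmt16_inter_pair_empty (F : Finset E) (e f : E) :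
    F ∩ {e, f} = ∅ ↔ e ∉ F ∧ f ∉ F := by
  simp only [Finset.eq_empty_iff_forall_notMem, Finset.mem_inter, Finset.mem_insert,
    Finset.mem_singleton]
  constructor
  · intro h
    exact ⟨fun he => h e ⟨he, Or.inl rfl⟩, fun hf => h f ⟨hf, Or.inr rfl⟩⟩
  · rintro ⟨he, hf⟩ a ⟨ha, rfl | rfl⟩
    · exact he ha
    · exact hf ha

lemma stmt16_eval_Tab (ends : E → Sym2 V) (x : E → ℝ) (A B : Finset E) :
    (((Tab ends A B).map ((MvPolynomial.aeval x).toRingHom :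
        MvPolynomial E ℤ →+* ℝ)).eval 1)
      = ∑ F ∈ Finset.univ.filter (fun F : Finset E => A ⊆ F ∧ F ∩ B = ∅),
          ∏ g ∈ F, x g := by
  simp [Tab, xF, Polynomial.eval_finset_sum, Polynomial.eval_prod, map_prod]

lemma stmt16_deriv_Tab (ends : E → Sym2 V) (x : E → ℝ) (A B : Finset E) :
    ((Polynomial.derivative ((Tab ends A B).map ((MvPolynomial.aeval x).toRingHom :
        MvPolynomial E ℤ →+* ℝ))).eval 1)
      = ∑ F ∈ Finset.univ.filter (fun F : Finset E => A ⊆ F ∧ F ∩ B = ∅),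
          (kComp ends F : ℝ) * ∏ g ∈ F, x g := by
  simp only [Tab, Polynomial.map_sum, Polynomial.map_mul, Polynomial.map_C,
    Polynomial.map_pow, Polynomial.map_X, map_sum, Polynomial.derivative_C_mul,
    Polynomial.derivative_X_pow, Polynomial.eval_finset_sum, Polynomial.eval_mul,
    Polynomial.eval_pow, Polynomial.eval_C, Polynomial.eval_X, Polynomial.eval_natCast,
    one_pow, mul_one]
  simp only [xF, map_prod, MvPolynomial.aeval_X, AlgHom.toRingHom_eq_coe, RingHom.coe_coe]
  exact Finset.sum_congr rfl fun F _ => by ring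

lemma stmt16_reindex1 (e f : E) (hef : e ≠ f) (h : Finset E → ℝ) :
    ∑ F ∈ Finset.univ.filter (fun F : Finset E => {e} ⊆ F ∧ F ∩ {f} = ∅), h F
      = ∑ A ∈ Finset.univ.filter (fun A : Finset E => A ∩ ({e, f} : Finset E) = ∅),
          h (insert e A) := by
  refine Finset.sum_nbij' (fun F => F.erase e) (fun A => insert e A) ?_ ?_ ?_ ?_ ?_
  · intro F hF
    simp only [Finset.mem_filter, Finset.singleton_subset_iff,
      stmt16_inter_singleton_empty] at hF
    simp only [Finset.mem_filter, Finset.mem_univ, true_and, stmt16_inter_pair_empty]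
    exact ⟨Finset.notMem_erase e F, fun hf => hF.2.2 (Finset.mem_of_mem_erase hf)⟩
  · intro A hA
    simp only [Finset.mem_filter, Finset.mem_univ, true_and, stmt16_inter_pair_empty] at hA
    simp only [Finset.mem_filter, Finset.mem_univ, true_and, Finset.singleton_subset_iff,
      stmt16_inter_singleton_empty]
    exact ⟨Finset.mem_insert_self e A, by
      simp only [Finset.mem_insert]
      rintro (rfl | hf)
      · exact hef rfl
      · exact hA.2 hf⟩
  · intro F hF
    simp only [Finset.mem_filter, Finset.singleton_subset_iff] at hF
    exact Finset.insert_erase hF.2.1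
  · intro A hA
    simp only [Finset.mem_filter, Finset.mem_univ, true_and, stmt16_inter_pair_empty] at hA
    exact Finset.erase_insert hA.1
  · intro F hF
    simp only [Finset.mem_filter, Finset.singleton_subset_iff] at hF
    rw [Finset.insert_erase hF.2.1]

lemma stmt16_reindex2 (e f : E) (hef : e ≠ f) (h : Finset E → ℝ) :
    ∑ F ∈ Finset.univ.filter (fun F : Finset E => ({e, f} : Finset E) ⊆ F ∧ F ∩ ∅ = ∅), h F
      = ∑ A ∈ Finset.univ.filter (fun A : Finset E => A ∩ ({e, f} : Finset E) = ∅),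
          h (insert f (insert e A)) := by
  refine Finset.sum_nbij' (fun F => (F.erase f).erase e) (fun A => insert f (insert e A))
    ?_ ?_ ?_ ?_ ?_
  · intro F hF
    simp only [Finset.mem_filter, Finset.mem_univ, true_and, stmt16_inter_pair_empty]
    refine ⟨Finset.notMem_erase e _, fun hf => ?_⟩
    exact Finset.notMem_erase f F (Finset.mem_of_mem_erase hf)
  · intro A hA
    simp only [Finset.mem_filter, Finset.mem_univ, true_and, stmt16_inter_pair_empty] at hA
    simp only [Finset.mem_filter, Finset.mem_univ, true_and, Finset.inter_empty, and_true,
      Finset.insert_subset_iff, Finset.singleton_subset_iff]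
    exact ⟨Finset.mem_insert_of_mem (Finset.mem_insert_self e A), Finset.mem_insert_self f _⟩
  · intro F hF
    simp only [Finset.mem_filter, Finset.mem_univ, true_and, Finset.insert_subset_iff,
      Finset.singleton_subset_iff] at hF
    show insert f (insert e ((F.erase f).erase e)) = F
    rw [Finset.insert_erase (Finset.mem_erase.mpr ⟨hef, hF.1.1⟩), Finset.insert_erase hF.1.2]
  · intro A hA
    simp only [Finset.mem_filter, Finset.mem_univ, true_and, stmt16_inter_pair_empty] at hA
    show ((insert f (insert e A)).erase f).erase e = A
    have hfA : f ∉ insert e A := by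
      simp only [Finset.mem_insert]
      rintro (rfl | hf)
      · exact hef rfl
      · exact hA.2 hf
    rw [Finset.erase_insert hfA, Finset.erase_insert hA.1]
  · intro F hF
    simp only [Finset.mem_filter, Finset.mem_univ, true_and, Finset.insert_subset_iff,
      Finset.singleton_subset_iff] at hF
    show h F = h (insert f (insert e ((F.erase f).erase e)))
    rw [Finset.insert_erase (Finset.mem_erase.mpr ⟨hef, hF.1.1⟩), Finset.insert_erase hF.1.2]

end AnAux

/-- if `D = x_e x_f (1−q) N`, then the evaluation of `N|_{q=1}` at any
strictly positive edge weights is nonnegative (i.e. `M_{ef}(1) ≥ 0`). -/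
theorem stmt16 {V E : Type*} [Fintype V] [Fintype E] [DecidableEq E]
    (ends : E → Sym2 V) (e f : E) (hef : e ≠ f)
    (N : Polynomial (MvPolynomial E ℤ))
    (hN : Dpoly ends e f =
      Polynomial.C (MvPolynomial.X e) * Polynomial.C (MvPolynomial.X f) *
        (1 - Polynomial.X) * N)
    (x : E → ℝ) (hx : ∀ g : E, 0 < x g) :
    0 ≤ MvPolynomial.aeval x (Polynomial.eval 1 N) := by
  classical
  set ev : MvPolynomial E ℤ →+* ℝ := ((MvPolynomial.aeval x).toRingHom :
    MvPolynomial E ℤ →+* ℝ) with hev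
  set S : Finset (Finset E) :=
    Finset.univ.filter (fun A : Finset E => A ∩ ({e, f} : Finset E) = ∅) with hS
  set t : Finset E → ℝ := fun F => ∏ g ∈ F, x g with ht
  have hmemS : ∀ A ∈ S, e ∉ A ∧ f ∉ A := by
    intro A hA
    rw [hS, Finset.mem_filter] at hA
    exact (stmt16_inter_pair_empty A e f).mp hA.2
  have htpos : ∀ A : Finset E, 0 ≤ t A := fun A =>
    Finset.prod_nonneg fun g _ => (hx g).le
  have hte : ∀ A ∈ S, t (insert e A) = x e * t A := by
    intro A hA
    exact Finset.prod_insert (hmemS A hA).1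
  have htf : ∀ A ∈ S, t (insert f A) = x f * t A := by
    intro A hA
    exact Finset.prod_insert (hmemS A hA).2
  have htef : ∀ A ∈ S, t (insert f (insert e A)) = x e * x f * t A := by
    intro A hA
    have hfA : f ∉ insert e A := by
      simp only [Finset.mem_insert]
      rintro (rfl | hf)
      · exact hef rfl
      · exact (hmemS A hA).2 hf
    calc t (insert f (insert e A)) = x f * t (insert e A) := Finset.prod_insert hfA
      _ = x e * x f * t A := by rw [hte A hA]; ring
  set P : ℝ := ∑ A ∈ S, t A with hP
  set Q1 : ℝ := ∑ A ∈ S, (kComp ends (insert e A) : ℝ) * t A with hQ1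
  set Q2 : ℝ := ∑ A ∈ S, (kComp ends (insert f A) : ℝ) * t A with hQ2
  set Q3 : ℝ := ∑ A ∈ S, (kComp ends (insert f (insert e A)) : ℝ) * t A with hQ3
  set Q4 : ℝ := ∑ A ∈ S, (kComp ends A : ℝ) * t A with hQ4
  have hpair : ({f, e} : Finset E) = {e, f} := Finset.pair_comm f e
  -- the four values and four derivatives
  have hV1 : ((Tab ends {e} {f}).map ev).eval 1 = x e * P := by
    rw [hev, stmt16_eval_Tab, stmt16_reindex1 e f hef t, hP, Finset.mul_sum]
    exact Finset.sum_congr rfl fun A hA => hte A hA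
  have hV2 : ((Tab ends {f} {e}).map ev).eval 1 = x f * P := by
    rw [hev, stmt16_eval_Tab, stmt16_reindex1 f e hef.symm t, hpair, hP, Finset.mul_sum]
    exact Finset.sum_congr rfl fun A hA => htf A hA
  have hV3 : ((Tab ends {e, f} ∅).map ev).eval 1 = x e * x f * P := by
    rw [hev, stmt16_eval_Tab, stmt16_reindex2 e f hef t, hP, Finset.mul_sum]
    exact Finset.sum_congr rfl fun A hA => htef A hA
  have hV4 : ((Tab ends ∅ {e, f}).map ev).eval 1 = P := by
    rw [hev, stmt16_eval_Tab, hP, hS]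
    apply Finset.sum_congr
    · apply Finset.filter_congr
      intro F _
      simp [Finset.empty_subset]
    · intro A _
      rfl
  have hK1 : (Polynomial.derivative ((Tab ends {e} {f}).map ev)).eval 1 = x e * Q1 := by
    rw [hev, stmt16_deriv_Tab,
      stmt16_reindex1 e f hef (fun F => (kComp ends F : ℝ) * t F), hQ1, Finset.mul_sum]
    exact Finset.sum_congr rfl fun A hA => by rw [hte A hA]; ring
  have hK2 : (Polynomial.derivative ((Tab ends {f} {e}).map ev)).eval 1 = x f * Q2 := by
    rw [hev, stmt16_deriv_Tab,
      stmt16_reindex1 f e hef.symm (fun F => (kComp ends F : ℝ) * t F), hpair, hQ2,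
      Finset.mul_sum]
    exact Finset.sum_congr rfl fun A hA => by rw [htf A hA]; ring
  have hK3 : (Polynomial.derivative ((Tab ends {e, f} ∅).map ev)).eval 1
      = x e * x f * Q3 := by
    rw [hev, stmt16_deriv_Tab,
      stmt16_reindex2 e f hef (fun F => (kComp ends F : ℝ) * t F), hQ3, Finset.mul_sum]
    exact Finset.sum_congr rfl fun A hA => by rw [htef A hA]; ring
  have hK4 : (Polynomial.derivative ((Tab ends ∅ {e, f}).map ev)).eval 1 = Q4 := by
    rw [hev, stmt16_deriv_Tab, hQ4, hS]
    apply Finset.sum_congr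
    · apply Finset.filter_congr
      intro F _
      simp [Finset.empty_subset]
    · intro A _
      rfl
  -- derivative of the mapped D at 1, from the definition of D
  have hDleft : (Polynomial.derivative ((Dpoly ends e f).map ev)).eval 1
      = (x e * Q1) * (x f * P) + (x e * P) * (x f * Q2)
        - ((x e * x f * Q3) * P + (x e * x f * P) * Q4) := by
    rw [Dpoly, Polynomial.map_sub, Polynomial.map_mul, Polynomial.map_mul,
      Polynomial.derivative_sub, Polynomial.derivative_mul, Polynomial.derivative_mul,
      Polynomial.eval_sub, Polynomial.eval_add, Polynomial.eval_add,
      Polynomial.eval_mul, Polynomial.eval_mul, Polynomial.eval_mul, Polynomial.eval_mul,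
      hV1, hV2, hV3, hV4, hK1, hK2, hK3, hK4]
  -- derivative of the mapped D at 1, from the hypothesis
  have hDright : (Polynomial.derivative ((Dpoly ends e f).map ev)).eval 1
      = -(x e * x f * ((N.map ev).eval 1)) := by
    rw [hN, Polynomial.map_mul, Polynomial.map_mul, Polynomial.map_mul,
      Polynomial.map_sub, Polynomial.map_one, Polynomial.map_X,
      Polynomial.map_C, Polynomial.map_C]
    have he' : ev (MvPolynomial.X e) = x e := by
      simp [hev]
    have hf' : ev (MvPolynomial.X f) = x f := by
      simp [hev]
    rw [he', hf']
    simp only [Polynomial.derivative_mul, Polynomial.derivative_C, Polynomial.derivative_sub,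
      Polynomial.derivative_one, Polynomial.derivative_X, Polynomial.eval_add,
      Polynomial.eval_mul, Polynomial.eval_sub, Polynomial.eval_one, Polynomial.eval_X,
      Polynomial.eval_C, Polynomial.eval_zero]
    ring
  -- the key identity
  have hkey : x e * x f * ((N.map ev).eval 1) = x e * x f * (P * (Q3 + Q4 - (Q1 + Q2))) := by
    have := hDleft.symm.trans hDright
    nlinarith [this]
  have hxef : (0 : ℝ) < x e * x f := mul_pos (hx e) (hx f)
  have hNval : (N.map ev).eval 1 = P * (Q3 + Q4 - (Q1 + Q2)) :=
    mul_left_cancel₀ (ne_of_gt hxef) hkey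
  -- nonnegativity
  have hPnn : 0 ≤ P := Finset.sum_nonneg fun A _ => htpos A
  have hQle : Q1 + Q2 ≤ Q3 + Q4 := by
    rw [hQ1, hQ2, hQ3, hQ4, ← Finset.sum_add_distrib, ← Finset.sum_add_distrib]
    apply Finset.sum_le_sum
    intro A _
    have hsup := stmt16_kComp_supermodular ends e f A
    have h1 : ((kComp ends (insert e A) : ℝ) + (kComp ends (insert f A) : ℝ))
        ≤ ((kComp ends (insert f (insert e A)) : ℝ) + (kComp ends A : ℝ)) := by
      push_cast
      exact_mod_cast Nat.cast_le.mpr hsup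
    nlinarith [htpos A]
  have hfinal : 0 ≤ (N.map ev).eval 1 := by
    rw [hNval]
    exact mul_nonneg hPnn (by linarith)
  have hcomm : (N.map ev).eval 1 = MvPolynomial.aeval x (N.eval 1) := by
    rw [Polynomial.eval_one_map]
    simp [hev]
  rw [← hcomm]
  exact hfinal
end
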